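/- arXiv:1403.4741 — 2 statements merged into one kernel-verified Lean document; each statement's English description precedes it below -/
import Mathlib

section
/- Let H be a finite abelian group of order n, let G = H ⋊ C₂ be the generalised dihedral group of H, and let C be the index-2 subgroup of G isomorphic to H. Suppose S ⊆ G satisfies 1 ∉ S, S = S⁻¹, and every element of G is a product of at most two elements of S. Write A = S ∩ C and B = S \ C, with m₁ = |A| and m₂ = |B|. Then m₂(m₁ + 1) ≥ n. -/
/-- The action of `ℤˣ = {±1}` on a commutative group `H` in which `-1` acts by the
inversion automorphism. -/
def invAut (H : Type*) [CommGroup H] : ℤˣ →* MulAut H where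
  toFun u := if u = 1 then 1 else MulEquiv.inv H
  map_one' := by simp
  map_mul' a b := by
    rcases Int.units_eq_one_or a with ha | ha <;> rcases Int.units_eq_one_or b with hb | hb <;>
      subst ha <;> subst hb <;> ext h <;> simp [MulEquiv.inv] <;> exact (inv_inv h).symm

/-!
Each of the `n` elements of `G \ C` is `b`, `a * b` or `b * a` with `a ∈ A`, `b ∈ B`, and
`b * a = a⁻¹ * b` because `b` acts on `C` by inversion. As `A` is inverse-closed, `G \ C` lies in
`({1} ∪ A) * B`, which has at most `(m₁ + 1) m₂` elements.
-/

open Finset Pointwise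

namespace SemidirectProduct

variable {N G : Type*} [Group N] [Group G] {φ : G →* MulAut N}

instance [Fintype N] [Fintype G] : Fintype (N ⋊[φ] G) := Fintype.ofEquiv _ equivProd.symm

theorem card_filter_right_eq [Fintype N] [Fintype G] [DecidableEq G] (x : G) :
    #{g : N ⋊[φ] G | g.right = x} = Fintype.card N := by
  have hfiber : ({g : N ⋊[φ] G | g.right = x} : Finset _) =
      univ.map ⟨fun h => ⟨h, x⟩, fun h h' hh => congrArg left hh⟩ := by
    ext g
    simp only [mem_filter, mem_univ, true_and, mem_map]
    exact ⟨fun hg => ⟨g.left, by ext <;> simp [hg]⟩, by rintro ⟨h, rfl⟩; rfl⟩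
  rw [hfiber, card_map, card_univ]

end SemidirectProduct

section invAut

variable {H : Type*} [CommGroup H]

@[simp]
theorem invAut_one_apply (x : H) : invAut H 1 x = x := by
  simp [invAut]

@[simp]
theorem invAut_neg_one_apply (x : H) : invAut H (-1) x = x⁻¹ := by
  simp [invAut]

theorem mul_eq_inv_mul_of_right_eq {a b : H ⋊[invAut H] ℤˣ} (ha : a.right = 1)
    (hb : b.right = -1) : b * a = a⁻¹ * b := by
  ext
  · simp [ha, hb, mul_comm]
  · simp [ha]

variable [DecidableEq (H ⋊[invAut H] ℤˣ)] {S : Finset (H ⋊[invAut H] ℤˣ)}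

theorem mul_mem_insert_one_mul_of_right_eq_neg_one (hinv : ∀ s ∈ S, s⁻¹ ∈ S)
    {a b : H ⋊[invAut H] ℤˣ} (ha : a ∈ S) (hb : b ∈ S) (hab : (a * b).right = -1) :
    a * b ∈ insert 1 {s ∈ S | s.right = 1} * {s ∈ S | s.right ≠ 1} := by
  rcases Int.units_eq_one_or a.right with ha₁ | ha₁
  · have hb₁ : b.right = -1 := by simpa [ha₁] using hab
    exact mul_mem_mul (mem_insert_of_mem (mem_filter.2 ⟨ha, ha₁⟩))
      (mem_filter.2 ⟨hb, by simp [hb₁]⟩)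
  · have hb₁ : b.right = 1 := by simpa [ha₁, neg_eq_iff_eq_neg] using hab
    rw [mul_eq_inv_mul_of_right_eq hb₁ ha₁]
    exact mul_mem_mul (mem_insert_of_mem (mem_filter.2 ⟨hinv b hb, by simp [hb₁]⟩))
      (mem_filter.2 ⟨ha, by simp [ha₁]⟩)

theorem filter_right_eq_neg_one_subset [Fintype H] (hinv : ∀ s ∈ S, s⁻¹ ∈ S)
    (hcov : ∀ g : H ⋊[invAut H] ℤˣ, g = 1 ∨ g ∈ S ∨ ∃ a ∈ S, ∃ b ∈ S, g = a * b) :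
    ({g : H ⋊[invAut H] ℤˣ | g.right = -1} : Finset _) ⊆
      insert 1 {s ∈ S | s.right = 1} * {s ∈ S | s.right ≠ 1} := by
  intro g hg
  replace hg : g.right = -1 := (mem_filter.1 hg).2
  rcases hcov g with rfl | hgS | ⟨a, ha, b, hb, rfl⟩
  · simp at hg
  · rw [← one_mul g]
    exact mul_mem_mul (mem_insert_self 1 _) (mem_filter.2 ⟨hgS, by simp [hg]⟩)
  · exact mul_mem_insert_one_mul_of_right_eq_neg_one hinv ha hb hg

end invAut

theorem generalised_dihedral_counting_general
    (H : Type*) [CommGroup H] [Fintype H] (n : ℕ) (hn : Fintype.card H = n)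
    (S : Finset (H ⋊[invAut H] ℤˣ))
    (hinv : ∀ s ∈ S, s⁻¹ ∈ S)
    (hcov : ∀ g : H ⋊[invAut H] ℤˣ, g = 1 ∨ g ∈ S ∨ ∃ a ∈ S, ∃ b ∈ S, g = a * b)
    (m₁ m₂ : ℕ)
    (hm₁ : m₁ = (S.filter (fun s => s.right = 1)).card)
    (hm₂ : m₂ = (S.filter (fun s => s.right ≠ 1)).card) :
    m₂ * (m₁ + 1) ≥ n := by
  classical
  subst hn hm₁ hm₂
  calc Fintype.card H = #{g : H ⋊[invAut H] ℤˣ | g.right = -1} :=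
        (SemidirectProduct.card_filter_right_eq _).symm
    _ ≤ #(insert 1 {s ∈ S | s.right = 1} * {s ∈ S | s.right ≠ 1}) :=
        card_le_card (filter_right_eq_neg_one_subset hinv hcov)
    _ ≤ #(insert 1 {s ∈ S | s.right = 1}) * #{s ∈ S | s.right ≠ 1} := card_mul_le
    _ ≤ (#{s ∈ S | s.right = 1} + 1) * #{s ∈ S | s.right ≠ 1} := by
        gcongr; exact card_insert_le _ _
    _ = _ := mul_comm _ _

/-- **Counting step of Lemma 2.** Let `G = H ⋊ C₂` be the generalised dihedral group of a
finite abelian group `H` of order `n`, and let `C = H × {1}` be the index-2 subgroup of `G`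
isomorphic to `H` (the elements with trivial `C₂`-component). Let `S ⊆ G` be inverse-closed,
avoid the identity, and be such that every element of `G` is a product of at most two
elements of `S`. Writing `A = S ∩ C`, `B = S \ C`, `m₁ = |A|`, `m₂ = |B|`, we have
`m₂(m₁ + 1) ≥ n`. -/
theorem generalised_dihedral_counting
    (H : Type*) [CommGroup H] [Fintype H] (n : ℕ) (hn : Fintype.card H = n)
    (S : Finset (H ⋊[invAut H] ℤˣ))
    (h1 : (1 : H ⋊[invAut H] ℤˣ) ∉ S)
    (hinv : ∀ s ∈ S, s⁻¹ ∈ S)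
    (hcov : ∀ g : H ⋊[invAut H] ℤˣ, g = 1 ∨ g ∈ S ∨ ∃ a ∈ S, ∃ b ∈ S, g = a * b)
    (m₁ m₂ : ℕ)
    (hm₁ : m₁ = (S.filter (fun s => s.right = 1)).card)
    (hm₂ : m₂ = (S.filter (fun s => s.right ≠ 1)).card) :
    m₂ * (m₁ + 1) ≥ n :=
  generalised_dihedral_counting_general H n hn S hinv hcov m₁ m₂ hm₁ hm₂
end

section
/- Define DC(d,2) to be the supremum of the orders 2n of dihedral groups G of order 2n admitting a subset S ⊆ G with 1 ∉ S, S = S⁻¹, |S| = d, and every element of G a product of at most two elements of S (and 0 if no such graph exists). Then limsup_{d→∞} DC(d,2)/d² = 1/2. -/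
/-!
Upper bound: if `S` contains `a` reflections and `b` rotations of the dihedral group of order
`2n`, every reflection not in `S` is `sr i * r j` or `r i * sr j` with both factors in `S`, and
since `S = S⁻¹` both kinds are of the form `sr (i + j)` with `sr i, r j ∈ S`. Hence
`n ≤ a + a b ≤ (a + b + 1)² / 4`.

Lower bound: let `K = 𝔽_q ⊆ L = 𝔽_{q²}` and `θ ∈ L \ K`. The set `B = {1} ∪ {θ + x | x ∈ K}`
meets every coset of `Kˣ` in the cyclic group `Lˣ ≅ ℤ/(q² - 1)`, and every element of `Lˣ \ Kˣ`
is a quotient of two elements of `B`. Reflections indexed by `B` together with rotations indexed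
by `Kˣ \ {1}` form a connection set of size `2q - 1` in the dihedral group of order
`2(q² - 1)`, and `2(q² - 1) / (2q - 1)² ≥ 1/2`.
-/

/-- `DC d` is the largest number of vertices of a Cayley graph of a dihedral group with
degree `d` and diameter at most 2: the supremum of the orders `2n` of dihedral groups
admitting an inverse-closed, identity-free subset `S` of size `d` such that every group
element is a product of at most two elements of `S` (and `0` if no such graph exists). -/
noncomputable def DC (d : ℕ) : ℕ :=
  sSup {m : ℕ | ∃ n : ℕ, 0 < n ∧ m = 2 * n ∧
    ∃ S : Finset (DihedralGroup n),
      (1 : DihedralGroup n) ∉ S ∧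
      (∀ s ∈ S, s⁻¹ ∈ S) ∧
      S.card = d ∧
      (∀ g : DihedralGroup n, g = 1 ∨ g ∈ S ∨ ∃ a ∈ S, ∃ b ∈ S, g = a * b)}

open Filter Finset Topology

def IsDiamTwoConnectionSet {G : Type*} [Group G] (S : Finset G) : Prop :=
  1 ∉ S ∧ (∀ s ∈ S, s⁻¹ ∈ S) ∧ ∀ g, g = 1 ∨ g ∈ S ∨ ∃ a ∈ S, ∃ b ∈ S, g = a * b

namespace DihedralGroup

variable {n : ℕ}

lemma sr_ne_one (i : ZMod n) : sr i ≠ 1 := by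
  simp [one_def, -r_zero]

@[simp]
lemma r_eq_one {i : ZMod n} : r i = 1 ↔ i = 0 := by
  simp [one_def, -r_zero]

def rotationIndices (S : Finset (DihedralGroup n)) : Finset (ZMod n) :=
  (S.map equivSum.toEmbedding).toLeft

def reflectionIndices (S : Finset (DihedralGroup n)) : Finset (ZMod n) :=
  (S.map equivSum.toEmbedding).toRight

@[simp]
lemma mem_rotationIndices {S : Finset (DihedralGroup n)} {i : ZMod n} :
    i ∈ rotationIndices S ↔ r i ∈ S := by
  simp [rotationIndices, mem_map_equiv]

@[simp]
lemma mem_reflectionIndices {S : Finset (DihedralGroup n)} {i : ZMod n} :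
    i ∈ reflectionIndices S ↔ sr i ∈ S := by
  simp [reflectionIndices, mem_map_equiv]

lemma card_rotationIndices_add_card_reflectionIndices (S : Finset (DihedralGroup n)) :
    #(rotationIndices S) + #(reflectionIndices S) = #S := by
  rw [rotationIndices, reflectionIndices, card_toLeft_add_card_toRight, card_map]

lemma univ_subset_reflectionIndices_union_add [NeZero n] {S : Finset (DihedralGroup n)}
    (hinv : ∀ s ∈ S, s⁻¹ ∈ S) (hsr : ∀ t, sr t ∈ S ∨ ∃ a ∈ S, ∃ b ∈ S, sr t = a * b) :
    univ ⊆ reflectionIndices S ∪ image₂ (· + ·) (reflectionIndices S) (rotationIndices S) := by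
  intro t _
  rcases hsr t with ht | ⟨a | a, ha, b | b, hb, hab⟩
  · exact mem_union_left _ (mem_reflectionIndices.2 ht)
  · simp at hab
  · obtain rfl : t = b - a := by simpa using hab
    refine mem_union_right _ (mem_image₂.2 ⟨b, by simpa using hb, -a, ?_, by ring⟩)
    simpa using hinv _ ha
  · obtain rfl : t = a + b := by simpa using hab
    exact mem_union_right _ (mem_image₂.2 ⟨a, by simpa using ha, b, by simpa using hb, rfl⟩)
  · simp at hab

theorem four_mul_le_sq_card_add_one [NeZero n] {S : Finset (DihedralGroup n)}
    (hinv : ∀ s ∈ S, s⁻¹ ∈ S) (hsr : ∀ t, sr t ∈ S ∨ ∃ a ∈ S, ∃ b ∈ S, sr t = a * b) :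
    4 * n ≤ (#S + 1) ^ 2 := by
  have hn : n ≤ #(reflectionIndices S) + #(reflectionIndices S) * #(rotationIndices S) :=
    calc n = #(univ : Finset (ZMod n)) := by rw [card_univ, ZMod.card]
      _ ≤ _ := card_le_card (univ_subset_reflectionIndices_union_add hinv hsr)
      _ ≤ _ := (card_union_le _ _).trans (Nat.add_le_add_left (card_image₂_le _ _ _) _)
  rw [← card_rotationIndices_add_card_reflectionIndices]
  nlinarith [sq_nonneg ((#(reflectionIndices S) : ℤ) - #(rotationIndices S) - 1)]

lemma exists_isDiamTwoConnectionSet {G : Type*} [Group G] [DecidableEq G]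
    (e : G ≃* Multiplicative (ZMod n)) (B H : Finset G) (hH : ∀ h ∈ H, h⁻¹ ∈ H)
    (hcover : ∀ g, ∃ b ∈ B, ∃ h ∈ H, g = b * h)
    (hdiff : ∀ g ∉ H, ∃ a ∈ B, ∃ b ∈ B, g = a * b⁻¹) :
    ∃ S : Finset (DihedralGroup n), IsDiamTwoConnectionSet S ∧ #S = #B + #(H.erase 1) := by
  set ι : G → ZMod n := fun g => (e g).toAdd
  have hι : ι.Injective := Multiplicative.toAdd.injective.comp e.injective
  have hsr : (sr ∘ ι).Injective := fun _ _ h => hι (sr.inj h)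
  have hr : (r ∘ ι).Injective := fun _ _ h => hι (r.inj h)
  have hsrι : ∀ b ∈ B, sr (ι b) ∈ B.image (sr ∘ ι) ∪ (H.erase 1).image (r ∘ ι) :=
    fun b hb => mem_union_left _ (mem_image_of_mem _ hb)
  have hrι : ∀ h ∈ H, h ≠ 1 → r (ι h) ∈ B.image (sr ∘ ι) ∪ (H.erase 1).image (r ∘ ι) :=
    fun h hh h1 => mem_union_right _ (mem_image_of_mem _ (mem_erase.2 ⟨h1, hh⟩))
  refine ⟨B.image (sr ∘ ι) ∪ (H.erase 1).image (r ∘ ι), ⟨?_, ?_, ?_⟩, ?_⟩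
  · simp [sr_ne_one, ι]
  · simp only [mem_union, mem_image, Function.comp_apply]
    rintro _ (⟨b, hb, rfl⟩ | ⟨h, hh, rfl⟩)
    · exact Or.inl ⟨b, hb, (inv_sr _).symm⟩
    · obtain ⟨h1, hh⟩ := mem_erase.1 hh
      exact Or.inr ⟨h⁻¹, mem_erase.2 ⟨inv_ne_one.2 h1, hH h hh⟩, by simp [ι]⟩
  · rintro (t | t) <;> obtain ⟨g, rfl⟩ : ∃ g, ι g = t := ⟨e.symm (.ofAdd t), by simp [ι]⟩
    · by_cases hg : g ∈ H
      · by_cases hg1 : g = 1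
        · exact Or.inl (by simp [hg1, ι])
        · exact Or.inr (Or.inl (hrι g hg hg1))
      · obtain ⟨a, ha, b, hb, rfl⟩ := hdiff g hg
        exact Or.inr (Or.inr ⟨_, hsrι b hb, _, hsrι a ha, by simp [ι, sub_eq_add_neg]⟩)
    · obtain ⟨b, hb, h, hh, rfl⟩ := hcover g
      by_cases hh1 : h = 1
      · subst hh1
        simpa using Or.inr (Or.inl (hsrι b hb))
      · exact Or.inr (Or.inr ⟨_, hsrι b hb, _, hrι h hh hh1, by simp [ι]⟩)
  · rw [card_union_of_disjoint, card_image_of_injective _ hsr, card_image_of_injective _ hr]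
    simp [disjoint_left]

end DihedralGroup

section QuadraticExtension

variable {K L : Type*} [Field K] [Field L] [Algebra K L] {θ : L}

lemma exists_notMem_range_algebraMap (hL : Module.finrank K L ≠ 1) :
    ∃ θ : L, θ ∉ Set.range (algebraMap K L) := by
  by_contra! h
  exact hL (Algebra.finrank_eq_one_iff_bijective_algebraMap.2
    ⟨(algebraMap K L).injective, fun z => h z⟩)

lemma add_algebraMap_notMem_range (hθ : θ ∉ Set.range (algebraMap K L)) (x : K) :
    θ + algebraMap K L x ∉ Set.range (algebraMap K L) := fun ⟨c, hc⟩ =>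
  hθ ⟨c - x, by rw [map_sub, hc, add_sub_cancel_right]⟩

lemma exists_eq_algebraMap_add_algebraMap_mul (hL : Module.finrank K L = 2)
    (hθ : θ ∉ Set.range (algebraMap K L)) (z : L) :
    ∃ s t : K, z = algebraMap K L s + algebraMap K L t * θ := by
  have hli : LinearIndependent K ![1, θ] := by
    refine LinearIndependent.pair_iff.2 fun s t hst => ?_
    rw [Algebra.smul_def, Algebra.smul_def, mul_one] at hst
    by_cases ht : t = 0
    · simpa [ht] using hst
    · refine absurd ⟨-s / t, ?_⟩ hθ
      rw [map_div₀, map_neg, div_eq_iff ((map_ne_zero _).2 ht)]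
      linear_combination -hst
  have hz : z ∈ Submodule.span K (Set.range ![1, θ]) :=
    (hli.span_eq_top_of_card_eq_finrank (by simp [hL])).symm ▸ Submodule.mem_top
  rw [Matrix.range_cons_cons_empty] at hz
  obtain ⟨s, t, hst⟩ := Submodule.mem_span_pair.1 hz
  exact ⟨s, t, by rw [← hst, Algebra.smul_def, Algebra.smul_def, mul_one]⟩

lemma mem_range_or_exists_eq_algebraMap_mul_add (hL : Module.finrank K L = 2)
    (hθ : θ ∉ Set.range (algebraMap K L)) (u : L) :
    u ∈ Set.range (algebraMap K L) ∨
      ∃ c x : K, c ≠ 0 ∧ u = algebraMap K L c * (θ + algebraMap K L x) := by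
  obtain ⟨s, t, rfl⟩ := exists_eq_algebraMap_add_algebraMap_mul hL hθ u
  by_cases ht : t = 0
  · exact Or.inl ⟨s, by simp [ht]⟩
  · refine Or.inr ⟨t, s / t, ht, ?_⟩
    rw [mul_add, ← map_mul, mul_div_cancel₀ _ ht]
    ring

lemma exists_mul_add_algebraMap_eq_add_algebraMap (hL : Module.finrank K L = 2)
    (hθ : θ ∉ Set.range (algebraMap K L)) {u : L} (hu : u ∉ Set.range (algebraMap K L)) :
    ∃ x y : K, u * (θ + algebraMap K L x) = θ + algebraMap K L y := by
  obtain ⟨s, t, rfl⟩ := exists_eq_algebraMap_add_algebraMap_mul hL hθ u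
  obtain ⟨s', t', hθ'⟩ := exists_eq_algebraMap_add_algebraMap_mul hL hθ
    ((algebraMap K L s + algebraMap K L t * θ) * θ)
  have ht : t ≠ 0 := by
    rintro rfl
    exact hu ⟨s, by simp⟩
  -- choose `x` so that the coefficient of `θ` in `u * (θ + x)` is `t' + t * x = 1`
  refine ⟨(1 - t') / t, s' + s * ((1 - t') / t), ?_⟩
  have hcoeff : t' + t * ((1 - t') / t) = 1 := by
    rw [mul_div_cancel₀ _ ht]
    ring
  calc _ = (algebraMap K L s + algebraMap K L t * θ) * θ
        + (algebraMap K L s + algebraMap K L t * θ) * algebraMap K L ((1 - t') / t) := by ring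
    _ = algebraMap K L (s' + s * ((1 - t') / t))
        + algebraMap K L (t' + t * ((1 - t') / t)) * θ := by
      rw [hθ']
      simp only [map_add, map_mul]
      ring
    _ = _ := by rw [hcoeff, map_one, one_mul, add_comm]

end QuadraticExtension

section FiniteField

variable (K L : Type*) [Field K] [Fintype K] [Field L] [Algebra K L]

open scoped Classical in
noncomputable def baseUnits : Finset Lˣ :=
  univ.image (Units.map (algebraMap K L : K →* L))

variable {K L}

lemma mem_baseUnits {g : Lˣ} : g ∈ baseUnits K L ↔ (g : L) ∈ Set.range (algebraMap K L) := by
  simp only [baseUnits, mem_image, mem_univ, true_and]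
  refine ⟨fun ⟨c, hc⟩ => ⟨c, by rw [← hc]; rfl⟩, fun ⟨c, hc⟩ => ⟨Units.mk0 c ?_, Units.ext hc⟩⟩
  rintro rfl
  exact g.ne_zero (by rw [← hc, map_zero])

lemma inv_mem_baseUnits {g : Lˣ} (hg : g ∈ baseUnits K L) : g⁻¹ ∈ baseUnits K L := by
  obtain ⟨c, hc⟩ := mem_baseUnits.1 hg
  exact mem_baseUnits.2 ⟨c⁻¹, by rw [Units.val_inv_eq_inv_val, ← hc, map_inv₀]⟩

open scoped Classical in
lemma card_baseUnits : #(baseUnits K L) = Fintype.card K - 1 := by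
  rw [baseUnits, card_image_of_injective _ (Units.map_injective (f := (algebraMap K L : K →* L))
    (algebraMap K L).injective), card_univ, Fintype.card_units]

theorem exists_dihedral_isDiamTwoConnectionSet_of_finrank_eq_two [Finite L]
    (hL : Module.finrank K L = 2) :
    ∃ S : Finset (DihedralGroup (Nat.card Lˣ)),
      IsDiamTwoConnectionSet S ∧ #S = 2 * Fintype.card K - 1 := by
  classical
  obtain ⟨θ, hθ⟩ := exists_notMem_range_algebraMap (K := K) (L := L) (by omega)
  let β : K → Lˣ := fun x => Units.mk0 (θ + algebraMap K L x)
    fun h0 => add_algebraMap_notMem_range hθ x ⟨0, by rw [h0, map_zero]⟩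
  have hβ : β.Injective := fun x y hxy => (algebraMap K L).injective <|
    add_left_cancel (congrArg Units.val hxy : θ + algebraMap K L x = θ + algebraMap K L y)
  have hβB : ∀ x, β x ∈ insert 1 (univ.image β) :=
    fun x => mem_insert_of_mem (mem_image_of_mem _ (mem_univ x))
  have hcover : ∀ g : Lˣ, ∃ b ∈ insert 1 (univ.image β), ∃ h ∈ baseUnits K L, g = b * h := by
    intro g
    rcases mem_range_or_exists_eq_algebraMap_mul_add hL hθ (g : L) with hg | ⟨c, x, hc, hg⟩
    · exact ⟨1, mem_insert_self _ _, g, mem_baseUnits.2 hg, (one_mul g).symm⟩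
    · refine ⟨β x, hβB x, Units.mk0 _ ((map_ne_zero _).2 hc), mem_baseUnits.2 ⟨c, rfl⟩,
        Units.ext ?_⟩
      rw [hg, mul_comm]
      rfl
  have hdiff : ∀ g ∉ baseUnits K L,
      ∃ a ∈ insert 1 (univ.image β), ∃ b ∈ insert 1 (univ.image β), g = a * b⁻¹ := by
    intro g hg
    obtain ⟨x, y, hxy⟩ :=
      exists_mul_add_algebraMap_eq_add_algebraMap hL hθ (mt mem_baseUnits.2 hg)
    exact ⟨β y, hβB y, β x, hβB x, eq_mul_inv_of_mul_eq (Units.ext hxy)⟩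
  obtain ⟨S, hS, hcard⟩ := DihedralGroup.exists_isDiamTwoConnectionSet
    (zmodCyclicMulEquiv inferInstance).symm _ _ (fun _ => inv_mem_baseUnits) hcover hdiff
  refine ⟨S, hS, ?_⟩
  have h1β : 1 ∉ univ.image β := by
    simp only [mem_image, mem_univ, true_and, not_exists]
    exact fun x hx =>
      add_algebraMap_notMem_range hθ x ⟨1, by rw [map_one, ← Units.val_one, ← hx]; rfl⟩
  have := Fintype.one_lt_card (α := K)
  rw [hcard, card_insert_of_notMem h1β, card_image_of_injective _ hβ, card_univ,
    card_erase_of_mem (mem_baseUnits.2 ⟨1, map_one _⟩), card_baseUnits]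
  omega

end FiniteField

def dihedralDiamTwoOrders (d : ℕ) : Set ℕ :=
  {m | ∃ n, 0 < n ∧ m = 2 * n ∧
    ∃ S : Finset (DihedralGroup n), IsDiamTwoConnectionSet S ∧ #S = d}

lemma DC_eq_sSup (d : ℕ) : DC d = sSup (dihedralDiamTwoOrders d) := by
  simp only [DC, dihedralDiamTwoOrders, IsDiamTwoConnectionSet]
  congr 1
  ext m
  refine exists_congr fun n => and_congr_right fun _ => and_congr_right fun _ =>
    exists_congr fun S => by tauto

lemma mem_upperBounds_dihedralDiamTwoOrders (d : ℕ) :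
    (d + 1) ^ 2 / 2 ∈ upperBounds (dihedralDiamTwoOrders d) := by
  rintro _ ⟨n, hn, rfl, S, ⟨-, hinv, hcov⟩, rfl⟩
  have : NeZero n := ⟨hn.ne'⟩
  have := DihedralGroup.four_mul_le_sq_card_add_one hinv fun t =>
    (hcov _).resolve_left (DihedralGroup.sr_ne_one t)
  omega

lemma DC_le (d : ℕ) : DC d ≤ (d + 1) ^ 2 / 2 :=
  (DC_eq_sSup d).trans_le (csSup_le' (mem_upperBounds_dihedralDiamTwoOrders d))

lemma two_mul_le_DC {n : ℕ} (hn : 0 < n) {S : Finset (DihedralGroup n)}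
    (hS : IsDiamTwoConnectionSet S) : 2 * n ≤ DC #S :=
  (DC_eq_sSup _).symm ▸
    le_csSup ⟨_, mem_upperBounds_dihedralDiamTwoOrders _⟩ ⟨n, hn, rfl, S, hS, rfl⟩

lemma two_mul_sq_sub_one_le_DC (p : ℕ) [Fact p.Prime] : 2 * (p ^ 2 - 1) ≤ DC (2 * p - 1) := by
  obtain ⟨S, hS, hcard⟩ :=
    exists_dihedral_isDiamTwoConnectionSet_of_finrank_eq_two (GaloisField.finrank p two_ne_zero)
  have hcardL : Nat.card (GaloisField p 2)ˣ = p ^ 2 - 1 := by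
    rw [Nat.card_units, GaloisField.card p 2 two_ne_zero]
  rw [ZMod.card] at hcard
  exact hcardL ▸ hcard ▸ two_mul_le_DC Nat.card_pos hS

lemma Filter.limsup_eq_of_le_of_tendsto_of_frequently_le {ι : Type*} {l : Filter ι} [NeBot l]
    {f g : ι → ℝ} {a : ℝ} (hfg : f ≤ᶠ[l] g) (hg : Tendsto g l (𝓝 a))
    (hf : ∃ᶠ x in l, a ≤ f x) : limsup f l = a := by
  have hcobdd : IsCoboundedUnder (· ≤ ·) l f :=
    ⟨a, fun c hc => (hf.and_eventually hc).exists.elim fun _ hx => hx.1.trans hx.2⟩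
  refine le_antisymm ?_ (le_limsup_of_frequently_le hf (hg.isBoundedUnder_le.mono_le hfg))
  exact hg.limsup_eq ▸ limsup_le_limsup hfg hcobdd hg.isBoundedUnder_le

lemma tendsto_add_one_sq_div_two_div_sq :
    Tendsto (fun d : ℕ => ((d : ℝ) + 1) ^ 2 / 2 / (d : ℝ) ^ 2) atTop (𝓝 (1 / 2)) := by
  have h : Tendsto (fun d : ℕ => (1 + (d : ℝ)⁻¹) ^ 2 / 2) atTop (𝓝 ((1 + 0) ^ 2 / 2)) :=
    (((tendsto_inv_atTop_zero.comp tendsto_natCast_atTop_atTop).const_add 1).pow 2).div_const 2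
  refine (by norm_num : ((1 : ℝ) + 0) ^ 2 / 2 = 1 / 2) ▸ h.congr' ?_
  filter_upwards [eventually_ne_atTop 0] with d hd
  field_simp

lemma DC_div_sq_le (d : ℕ) :
    (DC d : ℝ) / (d : ℝ) ^ 2 ≤ ((d : ℝ) + 1) ^ 2 / 2 / (d : ℝ) ^ 2 := by
  have h : 2 * DC d ≤ (d + 1) ^ 2 := by have := DC_le d; omega
  refine div_le_div_of_nonneg_right ?_ (sq_nonneg _)
  have : (2 * DC d : ℝ) ≤ ((d : ℝ) + 1) ^ 2 := by exact_mod_cast h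
  linarith

lemma one_half_le_DC_div_sq (p : ℕ) [Fact p.Prime] :
    1 / 2 ≤ (DC (2 * p - 1) : ℝ) / ((2 * p - 1 : ℕ) : ℝ) ^ 2 := by
  have hp2 := (Fact.out : p.Prime).two_le
  have hp : (2 : ℝ) ≤ p := by exact_mod_cast hp2
  have hDC : 2 * ((p : ℝ) ^ 2 - 1) ≤ DC (2 * p - 1) := by
    have h := two_mul_sq_sub_one_le_DC p
    rw [← Nat.cast_le (α := ℝ), Nat.cast_mul, Nat.cast_sub (Nat.one_le_pow _ _ (by omega))] at h
    exact_mod_cast h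
  rw [Nat.cast_sub (by omega), le_div_iff₀ (by push_cast; nlinarith)]
  push_cast
  nlinarith

/-- **Corollary (limsup form).** `limsup_{d → ∞} DC(d,2)/d² = 1/2`. -/
theorem limsup_DC_div_sq : Filter.limsup (fun d : ℕ => (DC d : ℝ) / (d : ℝ) ^ 2)
    Filter.atTop = 1 / 2 := by
  refine limsup_eq_of_le_of_tendsto_of_frequently_le (Eventually.of_forall DC_div_sq_le)
    tendsto_add_one_sq_div_two_div_sq (frequently_atTop.2 fun N => ?_)
  obtain ⟨p, hNp, hp⟩ := Nat.exists_infinite_primes (N + 1)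
  have := Fact.mk hp
  exact ⟨2 * p - 1, by omega, one_half_le_DC_div_sq p⟩
end
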